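/- For every n ≥ 1 and every nonempty factor F of the Zimin word Z_n, the letter of maximum value occurring in F occurs exactly once in F. -/

import Mathlib

/-!
The factors of `Z_{n+1} = Z_n (n+1) Z_n` avoiding the letter `n + 1` are factors of `Z_n`, so
induction handles them; a factor containing `n + 1` has it as its maximum, and `n + 1` occurs
only once in all of `Z_{n+1}`.
-/

def Zimin : ℕ → List ℕ
  | 0 => []
  | n + 1 => Zimin n ++ (n + 1) :: Zimin n

namespace List

variable {α : Type*}

theorem eq_nil_of_prefix_cons_of_not_mem {p r : List α} {x : α} (h : p <+: x :: r)
    (hx : x ∉ p) : p = [] := by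
  rcases prefix_cons_iff.mp h with hp | ⟨t, rfl, -⟩
  · exact hp
  · exact absurd mem_cons_self hx

theorem IsInfix.infix_or_infix_of_not_mem {F l r : List α} {x : α}
    (h : F <:+: l ++ x :: r) (hx : x ∉ F) : F <:+: l ∨ F <:+: r := by
  rcases infix_append_iff.mp h with hl | hr | ⟨l₁, l₂, rfl, hl₁, hl₂⟩
  · exact .inl hl
  · rcases infix_cons_iff.mp hr with hp | hr
    · exact .inl (by simp [eq_nil_of_prefix_cons_of_not_mem hp hx])
    · exact .inr hr
  · have : l₂ = [] := eq_nil_of_prefix_cons_of_not_mem hl₂ (fun h ↦ hx (mem_append_right _ h))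
    subst this
    exact .inl (by simpa using hl₁.isInfix)

end List

theorem le_of_mem_zimin {a n : ℕ} (h : a ∈ Zimin n) : a ≤ n := by
  induction n with
  | zero => simp [Zimin] at h
  | succ m ih =>
    simp only [Zimin, List.mem_append, List.mem_cons] at h
    rcases h with h | rfl | h
    exacts [Nat.le_succ_of_le (ih h), le_rfl, Nat.le_succ_of_le (ih h)]

theorem count_zimin_succ_self (n : ℕ) : (Zimin (n + 1)).count (n + 1) = 1 := by
  have hz : (Zimin n).count (n + 1) = 0 :=
    List.count_eq_zero.mpr fun h ↦ by simpa using le_of_mem_zimin h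
  simp [Zimin, List.count_append, hz]

theorem zimin_factor_max_unique_general (n : ℕ)
    (F : List ℕ) (hF : F <:+: Zimin n)
    (M : ℕ) (hM : M ∈ F) (hmax : ∀ a ∈ F, a ≤ M) :
    F.count M = 1 := by
  induction n generalizing F with
  | zero => simp_all [Zimin]
  | succ m ih =>
    by_cases hmem : m + 1 ∈ F
    · have hMeq : M = m + 1 := le_antisymm (le_of_mem_zimin (hF.subset hM)) (hmax _ hmem)
      subst hMeq
      have hle : F.count (m + 1) ≤ 1 :=
        (hF.sublist.count_le (m + 1)).trans_eq (count_zimin_succ_self m)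
      have hpos : 0 < F.count (m + 1) := List.count_pos_iff.mpr hmem
      omega
    · rcases (show F <:+: Zimin m ++ (m + 1) :: Zimin m from hF).infix_or_infix_of_not_mem hmem
        with h | h <;> exact ih F h hM hmax

theorem zimin_factor_max_unique (n : ℕ) (hn : 1 ≤ n)
    (F : List ℕ) (hne : F ≠ []) (hF : F <:+: Zimin n)
    (M : ℕ) (hM : M ∈ F) (hmax : ∀ a ∈ F, a ≤ M) :
    F.count M = 1 :=
  zimin_factor_max_unique_general n F hF M hM hmax
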